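/- Let f: M → M be a Kupka-Smale diffeomorphism of a compact manifold with the shadowing property. If a chain transitive class Λ contains a periodic point p, then Λ equals the homoclinic class of p. -/

import Mathlib

open Function Topology Filter
open scoped Manifold

noncomputable section

variable {d : ℕ} {M : Type*} [MetricSpace M] [CompactSpace M]
  [ChartedSpace (EuclideanSpace ℝ (Fin d)) M]

/-- The shadowing property for an invertible map of a metric space. -/
def ShadowingProperty (f : M ≃ M) : Prop :=
  ∀ ε > (0 : ℝ), ∃ δ > (0 : ℝ), ∀ x : ℤ → M,
    (∀ n : ℤ, dist (f (x n)) (x (n + 1)) < δ) →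
    ∃ y : M, ∀ n : ℤ, dist ((f ^ n) y) (x n) < ε

/-- There is a finite `ε`-pseudo-orbit (an `ε`-chain) from `x` to `y`. -/
def ChainFrom (f : M → M) (ε : ℝ) (x y : M) : Prop :=
  ∃ n : ℕ, 0 < n ∧ ∃ c : ℕ → M, c 0 = x ∧ c n = y ∧
    ∀ i < n, dist (f (c i)) (c (i + 1)) < ε

/-- `x` and `y` lie in the same chain transitive class. -/
def SameChainClass (f : M → M) (x y : M) : Prop :=
  ∀ ε > (0 : ℝ), ChainFrom f ε x y ∧ ChainFrom f ε y x

/-- The chain transitive class of a point `p`. -/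
def chainClass (f : M → M) (p : M) : Set M := {x | SameChainClass f x p}

/-- The stable set of the point `p` for the map `g`. -/
def stableSet (g : M → M) (p : M) : Set M :=
  {x | Tendsto (fun n : ℕ => dist (g^[n] x) (g^[n] p)) atTop (𝓝 0)}

/-- The stable set of the orbit of `p`. -/
def orbitStable (f : M ≃ M) (p : M) : Set M :=
  ⋃ n : ℤ, stableSet ⇑f ((f ^ n) p)

/-- The unstable set of the orbit of `p`. -/
def orbitUnstable (f : M ≃ M) (p : M) : Set M :=
  ⋃ n : ℤ, stableSet ⇑f.symm ((f ^ n) p)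

/-- Two sets intersect transversally at `z`: read in the preferred chart at `z`, the
tangent cones of the two sets span the whole model space. -/
def TransverseAt (z : M) (A B : Set M) : Prop :=
  Submodule.span ℝ (tangentConeAt ℝ
      (extChartAt (𝓡 d) z '' (A ∩ (extChartAt (𝓡 d) z).source)) (extChartAt (𝓡 d) z z)) ⊔
    Submodule.span ℝ (tangentConeAt ℝ
      (extChartAt (𝓡 d) z '' (B ∩ (extChartAt (𝓡 d) z).source)) (extChartAt (𝓡 d) z z)) = ⊤

/-- `p` is a hyperbolic periodic point of (least or not) period `k` for `f`: the derivative
of `f^[k]` at `p` admits an invariant splitting into a uniformly contracted and a uniformly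
expanded subspace. -/
def IsHyperbolicPeriodicPt (f : M → M) (p : M) (k : ℕ) : Prop :=
  0 < k ∧ f^[k] p = p ∧
  ∀ A : EuclideanSpace ℝ (Fin d) →L[ℝ] EuclideanSpace ℝ (Fin d),
    A = mfderiv (𝓡 d) (𝓡 d) (f^[k]) p →
    ∃ (Es Eu : Submodule ℝ (EuclideanSpace ℝ (Fin d))) (C lam : ℝ),
      IsCompl Es Eu ∧ 0 < C ∧ 0 < lam ∧ lam < 1 ∧
      (∀ v ∈ Es, A v ∈ Es) ∧ (∀ v ∈ Eu, A v ∈ Eu) ∧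
      (∀ n : ℕ, ∀ v ∈ Es, ‖(A ^ n) v‖ ≤ C * lam ^ n * ‖v‖) ∧
      (∀ n : ℕ, ∀ v ∈ Eu, C⁻¹ * (lam ^ n)⁻¹ * ‖v‖ ≤ ‖(A ^ n) v‖)

/-- `p` is a periodic point of `f`. -/
def IsPeriodic (f : M → M) (p : M) : Prop := ∃ k : ℕ, 0 < k ∧ f^[k] p = p

/-- `f` is Kupka–Smale: all periodic points are hyperbolic and all intersections of stable
and unstable manifolds of periodic orbits are transverse. -/
def KupkaSmale (f : M ≃ M) : Prop :=
  (∀ (p : M) (k : ℕ), 0 < k → (⇑f)^[k] p = p → IsHyperbolicPeriodicPt (d := d) ⇑f p k) ∧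
  (∀ p q z : M, IsPeriodic ⇑f p → IsPeriodic ⇑f q →
    z ∈ orbitStable f p → z ∈ orbitUnstable f q →
    TransverseAt (d := d) z (orbitStable f p) (orbitUnstable f q))

/-- The homoclinic class of a periodic point `p`: the closure of the set of transverse
intersection points of the stable and unstable manifolds of the orbit of `p`. -/
def homoclinicClass (f : M ≃ M) (p : M) : Set M :=
  closure {z | z ∈ orbitStable f p ∧ z ∈ orbitUnstable f p ∧
    TransverseAt (d := d) z (orbitStable f p) (orbitUnstable f p)}


/-!
A point `x` chain equivalent to `p` is joined to `p` by `δ`-chains in both directions. Continuing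
these chains by the exact orbit of `p` into the past and the future gives a bi-infinite
`δ`-pseudo-orbit, and shadowing turns it into a true orbit through a point `y` near `x` that stays
close to the orbit of `p` for all large positive and negative times. Near a hyperbolic periodic
point such orbits are asymptotic to it: in a chart, a power of the map contracts the stable and
expands the unstable direction by a factor `4`, and a cone argument shows that a bounded orbit
must lose its unstable component and then decay. Hence `y ∈ Wˢ(O(p)) ∩ Wᵘ(O(p))`, and this
intersection is transverse by the Kupka–Smale condition. Conversely, every point of
`Wˢ(O(p)) ∩ Wᵘ(O(p))` is chain equivalent to `p`, and the chain class is closed.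
-/

namespace ChainFrom

variable {X : Type*} [MetricSpace X] {f : X → X} {ε δ : ℝ} {x x' y y' z : X}

theorem trans (hxy : ChainFrom f ε x y) (hyz : ChainFrom f ε y z) : ChainFrom f ε x z := by
  obtain ⟨m, hm, c, hc0, hcm, hc⟩ := hxy
  obtain ⟨n, hn, e, he0, hen, he⟩ := hyz
  set g : ℕ → X := fun i => if i ≤ m then c i else e (i - m)
  have hg : ∀ i ≥ m, g i = e (i - m) := by
    intro i hi
    rcases hi.eq_or_lt with rfl | hi
    · simp [g, hcm, he0]
    · simp [g, hi.not_ge]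
  refine ⟨m + n, by omega, g, by simp [g, hc0], by simp [hg, hen], fun i hi => ?_⟩
  rcases lt_or_ge i m with him | him
  · simpa [g, him.le, Nat.succ_le_of_lt him] using hc i him
  · rw [hg i him, hg (i + 1) (by omega), Nat.sub_add_comm him]
    exact he _ (by omega)

theorem of_dist_le_start (h : ChainFrom f ε x' y) (hx : dist (f x) (f x') ≤ δ) :
    ChainFrom f (δ + ε) x y := by
  obtain ⟨n, hn, c, hc0, hcn, hc⟩ := h
  refine ⟨n, hn, Function.update c 0 x, by simp, by simp [hn.ne', hcn], fun i hi => ?_⟩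
  rcases Nat.eq_zero_or_pos i with rfl | hi0
  · calc dist (f (Function.update c 0 x 0)) (Function.update c 0 x 1)
        ≤ dist (f x) (f x') + dist (f (c 0)) (c 1) := by
          simpa [hc0] using dist_triangle (f x) (f x') (c 1)
      _ < δ + ε := by linarith [hc 0 hi]
  · simpa [hi0.ne'] using (hc i hi).trans_le (le_add_of_nonneg_left (dist_nonneg.trans hx))

theorem of_dist_le_end (h : ChainFrom f ε x y') (hy : dist y' y ≤ δ) :
    ChainFrom f (ε + δ) x y := by
  obtain ⟨n, hn, c, hc0, hcn, hc⟩ := h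
  refine ⟨n, hn, Function.update c n y, by simp [hn.ne, hc0], by simp, fun i hi => ?_⟩
  rw [Function.update_of_ne hi.ne]
  rcases eq_or_ne (i + 1) n with hin | hin
  · rw [hin, Function.update_self]
    calc dist (f (c i)) y ≤ dist (f (c i)) (c (i + 1)) + dist y' y := by
          simpa [hin, hcn] using dist_triangle (f (c i)) y' y
      _ < ε + δ := by linarith [hc i hi]
  · rw [Function.update_of_ne hin]
    exact (hc i hi).trans_le (le_add_of_nonneg_right (dist_nonneg.trans hy))

end ChainFrom

section Chains

variable {X : Type*} [MetricSpace X] {f : X → X} {ε : ℝ} {x y : X}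

theorem chainFrom_of_dist_iterate_lt {n : ℕ} (hn : 0 < n) (h : dist (f^[n] x) y < ε) :
    ChainFrom f ε x y := by
  have hε : 0 < ε := dist_nonneg.trans_lt h
  refine ⟨n, hn, fun i => if i < n then f^[i] x else y, by simp [hn], by simp, fun i hi => ?_⟩
  rcases lt_or_eq_of_le (Nat.succ_le_of_lt hi) with hin | hin
  · simpa [hi, hin, ← Function.iterate_succ_apply' f i x] using hε
  · simpa [hi, ← hin, ← Function.iterate_succ_apply' f i x] using h

theorem chainFrom_of_dist_lt_iterate (h : dist (f x) y < ε) (n : ℕ) :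
    ChainFrom f ε x (f^[n] y) := by
  have hε : 0 < ε := dist_nonneg.trans_lt h
  refine ⟨n + 1, n.succ_pos, fun | 0 => x | i + 1 => f^[i] y, rfl, rfl, fun i _ => ?_⟩
  cases i with
  | zero => simpa using h
  | succ i => simpa [← Function.iterate_succ_apply' f i y] using hε

theorem isClosed_chainClass (hf : Continuous f) (p : X) : IsClosed (chainClass f p) := by
  refine isClosed_of_closure_subset fun x hx ε hε => ?_
  obtain ⟨η, hη, hfη⟩ := Metric.continuous_iff.mp hf x (ε / 2) (half_pos hε)
  obtain ⟨x', hx', hxx'⟩ := Metric.mem_closure_iff.mp hx (min η (ε / 2)) (lt_min hη (half_pos hε))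
  obtain ⟨hx'p, hpx'⟩ := hx' (ε / 2) (half_pos hε)
  have hfx : dist (f x) (f x') ≤ ε / 2 := by
    rw [dist_comm]
    exact (hfη x' (by rw [dist_comm]; exact hxx'.trans_le (min_le_left _ _))).le
  have hx'x : dist x' x ≤ ε / 2 := by
    rw [dist_comm]
    exact hxx'.le.trans (min_le_right _ _)
  exact ⟨add_halves ε ▸ hx'p.of_dist_le_start hfx, add_halves ε ▸ hpx'.of_dist_le_end hx'x⟩

end Chains

namespace Equiv.Perm

variable {X : Type*} (F : Perm X)

theorem iterate_apply_eq_zpow_apply (n : ℕ) (x : X) : F^[n] x = (F ^ (n : ℤ)) x := by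
  rw [zpow_natCast, iterate_eq_pow]

theorem symm_iterate_apply_eq_zpow_apply (n : ℕ) (x : X) :
    F.symm^[n] x = (F ^ (-(n : ℤ))) x := by
  rw [zpow_neg, zpow_natCast, ← inv_pow, inv_def, iterate_eq_pow]

theorem zpow_apply_zpow_apply (a b : ℤ) (x : X) : (F ^ a) ((F ^ b) x) = (F ^ (a + b)) x := by
  rw [zpow_add, mul_apply]

end Equiv.Perm

namespace Function.IsPeriodicPt

open Equiv.Perm

variable {X : Type*} {F : Equiv.Perm X} {k : ℕ} {p : X}

theorem exists_iterate_eq_zpow_apply (hp : IsPeriodicPt F k p) (hk : 0 < k) (z : ℤ) :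
    ∃ n, 0 < n ∧ F^[n] p = (F ^ z) p := by
  have hkp : (F ^ (k : ℤ)) p = p := by rw [← iterate_apply_eq_zpow_apply]; exact hp
  have hk' : (0 : ℤ) < k := by exact_mod_cast hk
  refine ⟨(z % k).toNat + k, by omega, ?_⟩
  rw [iterate_apply_eq_zpow_apply, Nat.cast_add, Int.toNat_of_nonneg (Int.emod_nonneg z hk'.ne'),
    ← zpow_apply_zpow_apply, hkp]
  conv_rhs => rw [← Int.emod_add_mul_ediv z k, ← zpow_apply_zpow_apply, zpow_mul,
    zpow_apply_eq_self_of_apply_eq_self hkp]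

theorem chainFrom_zpow_apply [MetricSpace X] {ε : ℝ} (hp : IsPeriodicPt F k p) (hk : 0 < k)
    (hε : 0 < ε) (a b : ℤ) : ChainFrom F ε ((F ^ a) p) ((F ^ b) p) := by
  obtain ⟨n, hn, hnp⟩ := hp.exists_iterate_eq_zpow_apply hk (b - a)
  refine chainFrom_of_dist_iterate_lt hn ?_
  rwa [iterate_apply_eq_zpow_apply, zpow_apply_comm, ← iterate_apply_eq_zpow_apply, hnp,
    zpow_apply_zpow_apply, add_sub_cancel, dist_self]

end Function.IsPeriodicPt

section StableSets

variable {X : Type*} [MetricSpace X]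

theorem exists_chainFrom_iterate_of_mem_stableSet {f : X → X} {ε : ℝ} {z q : X}
    (hz : z ∈ stableSet f q) (hε : 0 < ε) : ∃ n, ChainFrom f ε z (f^[n] q) := by
  obtain ⟨n, hn, hn1⟩ := ((hz.eventually_lt_const hε).and (eventually_gt_atTop 0)).exists
  exact ⟨n, chainFrom_of_dist_iterate_lt hn1 hn⟩

theorem exists_chainFrom_symm_iterate_of_mem_stableSet_symm {F : Equiv.Perm X} {ε : ℝ}
    {z q : X} (hz : z ∈ stableSet F.symm q) (hε : 0 < ε) :
    ∃ n, ChainFrom F ε (F.symm^[n + 1] q) z := by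
  obtain ⟨n, hn⟩ := (hz.eventually_lt_const hε).exists
  refine ⟨n, ?_⟩
  have h := chainFrom_of_dist_lt_iterate (f := F) (x := F.symm^[n + 1] q) (y := F.symm^[n] z)
    (by rwa [Function.iterate_succ_apply', Equiv.apply_symm_apply, dist_comm]) n
  rwa [(Function.LeftInverse.iterate F.apply_symm_apply n) z] at h

theorem orbitStable_inter_orbitUnstable_subset_chainClass {F : Equiv.Perm X} {k : ℕ} {p : X}
    (hp : Function.IsPeriodicPt F k p) (hk : 0 < k) :
    orbitStable F p ∩ orbitUnstable F p ⊆ chainClass F p := by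
  rintro z ⟨hzs, hzu⟩ ε hε
  obtain ⟨a, hza⟩ := Set.mem_iUnion.mp hzs
  obtain ⟨b, hzb⟩ := Set.mem_iUnion.mp hzu
  obtain ⟨m, hzm⟩ := exists_chainFrom_iterate_of_mem_stableSet hza hε
  obtain ⟨n, hnz⟩ := exists_chainFrom_symm_iterate_of_mem_stableSet_symm hzb hε
  rw [Equiv.Perm.iterate_apply_eq_zpow_apply, Equiv.Perm.zpow_apply_zpow_apply] at hzm
  rw [Equiv.Perm.symm_iterate_apply_eq_zpow_apply, Equiv.Perm.zpow_apply_zpow_apply] at hnz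
  have hzp := hp.chainFrom_zpow_apply hk hε (m + a) 0
  have hpz := hp.chainFrom_zpow_apply hk hε 0 (-(n + 1 : ℕ) + b)
  rw [zpow_zero, Equiv.Perm.one_apply] at hzp hpz
  exact ⟨hzm.trans hzp, hpz.trans hnz⟩

end StableSets

section PseudoOrbits

variable {X : Type*} [MetricSpace X]

def IsPseudoOrbit (f : X → X) (δ : ℝ) (ξ : ℤ → X) : Prop :=
  ∀ n, dist (f (ξ n)) (ξ (n + 1)) < δ

theorem IsPseudoOrbit.comp_add_right {f : X → X} {δ : ℝ} {ξ : ℤ → X} (h : IsPseudoOrbit f δ ξ)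
    (a : ℤ) : IsPseudoOrbit f δ (fun m => ξ (m + a)) := fun n => by
  simpa only [add_right_comm n 1 a] using h (n + a)

theorem IsPseudoOrbit.exists_glue {f : X → X} {δ : ℝ} {ξ η : ℤ → X} (hξ : IsPseudoOrbit f δ ξ)
    (hη : IsPseudoOrbit f δ η) (h0 : ξ 0 = η 0) :
    ∃ ζ, IsPseudoOrbit f δ ζ ∧ (∀ m ≤ 0, ζ m = ξ m) ∧ ∀ m ≥ 0, ζ m = η m := by
  set ζ : ℤ → X := fun m => if m ≤ 0 then ξ m else η m
  have hζξ : ∀ m ≤ 0, ζ m = ξ m := fun m hm => if_pos hm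
  have hζη : ∀ m ≥ 0, ζ m = η m := fun m hm => by
    rcases hm.eq_or_lt with rfl | hm
    · exact (if_pos le_rfl).trans h0
    · exact if_neg hm.not_ge
  refine ⟨ζ, fun m => ?_, hζξ, hζη⟩
  rcases lt_or_ge m 0 with hm | hm
  · rw [hζξ m hm.le, hζξ (m + 1) (by omega)]
    exact hξ m
  · rw [hζη m hm, hζη (m + 1) (by omega)]
    exact hη m

theorem ChainFrom.exists_isPseudoOrbit {F : Equiv.Perm X} {δ : ℝ} {x y : X}
    (h : ChainFrom F δ x y) :
    ∃ n : ℕ, ∃ ξ : ℤ → X, IsPseudoOrbit F δ ξ ∧ (∀ m ≤ 0, ξ m = (F ^ m) x) ∧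
      ∀ m ≥ 0, ξ (n + m) = (F ^ m) y := by
  obtain ⟨n, hn, c, hc0, hcn, hc⟩ := h
  have hδ : 0 < δ := dist_nonneg.trans_lt (hc 0 hn)
  -- the pseudo-orbit follows `c` on `[0, n]` and the exact orbits of its endpoints outside
  set t : ℤ → ℤ := fun m => max 0 (min m n) with ht
  refine ⟨n, fun m => (F ^ (m - t m)) (c (t m).toNat), fun m => ?_, fun m hm => ?_,
    fun m hm => ?_⟩
  · by_cases hstep : t (m + 1) = t m
    · beta_reduce
      rw [hstep, show m + 1 - t m = 1 + (m - t m) by ring, ← Equiv.Perm.zpow_apply_zpow_apply,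
        zpow_one, dist_self]
      exact hδ
    · simp only [ht] at hstep
      obtain ⟨i, rfl, hi⟩ : ∃ i : ℕ, m = i ∧ i < n := ⟨m.toNat, by omega, by omega⟩
      have h1 : t i = i := by simp only [ht]; omega
      have h2 : t (i + 1) = (i + 1 : ℕ) := by simp only [ht]; omega
      simpa [h1, h2] using hc i hi
  · have : t m = 0 := by simp only [ht]; omega
    simp [this, hc0]
  · have : t (n + m) = n := by simp only [ht]; omega
    simp [this, hcn]

end PseudoOrbits

section Shadowing

variable {X : Type*} [MetricSpace X] {F : Equiv.Perm X}

theorem ShadowingProperty.exists_shadow_of_chainFrom (hsh : ShadowingProperty F) {ε : ℝ}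
    (hε : 0 < ε) :
    ∃ δ > 0, ∀ a x b : X, ChainFrom F δ a x → ChainFrom F δ x b → ∃ y, dist x y < ε ∧
      (∃ n, ∀ j, dist (F^[j] (F^[n] y)) (F^[j] b) < ε) ∧
      ∃ n, ∀ j, dist (F.symm^[j] (F.symm^[n] y)) (F.symm^[j] a) < ε := by
  obtain ⟨δ, hδ, hsh⟩ := hsh ε hε
  refine ⟨δ, hδ, fun a x b hax hxb => ?_⟩
  obtain ⟨n₁, ξ, hξ, hξa, hξx⟩ := hax.exists_isPseudoOrbit
  obtain ⟨n₂, η, hη, hηx, hηb⟩ := hxb.exists_isPseudoOrbit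
  obtain ⟨ζ, hζ, hζξ, hζη⟩ := (hξ.comp_add_right n₁).exists_glue hη
    (by simpa using (hξx 0 le_rfl).trans (hηx 0 le_rfl).symm)
  obtain ⟨y, hy⟩ := hsh ζ hζ
  refine ⟨y, ?_, ⟨n₂, fun j => ?_⟩, ⟨n₁, fun j => ?_⟩⟩
  · simpa [dist_comm, hζη 0 le_rfl, hηx 0 le_rfl] using hy 0
  · have h := hy (n₂ + j)
    rw [hζη _ (by omega), hηb _ (by omega)] at h
    simp only [Equiv.Perm.iterate_apply_eq_zpow_apply, Equiv.Perm.zpow_apply_zpow_apply]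
    rwa [add_comm]
  · have h := hy (-j - n₁)
    rw [hζξ _ (by omega), sub_add_cancel, hξa _ (by omega)] at h
    simp only [Equiv.Perm.symm_iterate_apply_eq_zpow_apply, Equiv.Perm.zpow_apply_zpow_apply]
    rwa [← sub_eq_add_neg]

theorem iterate_mem_stableSet_iff {f : X → X} (n : ℕ) {w q : X} :
    f^[n] w ∈ stableSet f (f^[n] q) ↔ w ∈ stableSet f q := by
  simp only [stableSet, Set.mem_ofPred_eq, ← Function.iterate_add_apply]
  exact tendsto_add_atTop_iff_nat (f := fun j => dist (f^[j] w) (f^[j] q)) n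

theorem mem_stableSet_zpow_of_iterate_mem (n : ℕ) {y p : X} (h : F^[n] y ∈ stableSet F p) :
    y ∈ stableSet F ((F ^ (-(n : ℤ))) p) := by
  rwa [← iterate_mem_stableSet_iff n, Equiv.Perm.iterate_apply_eq_zpow_apply,
    Equiv.Perm.zpow_apply_zpow_apply, add_neg_cancel, zpow_zero, Equiv.Perm.one_apply]

theorem chainClass_subset_closure_orbitStable_inter_orbitUnstable (hsh : ShadowingProperty F)
    {p : X} {εs εu : ℝ} (hεs : 0 < εs) (hεu : 0 < εu)
    (hs : ∀ w, (∀ j, dist (F^[j] w) (F^[j] p) ≤ εs) → w ∈ stableSet F p)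
    (hu : ∀ w, (∀ j, dist (F.symm^[j] w) (F.symm^[j] p) ≤ εu) → w ∈ stableSet F.symm p) :
    chainClass F p ⊆ closure (orbitStable F p ∩ orbitUnstable F p) := by
  intro x hx
  refine Metric.mem_closure_iff.mpr fun ε hε => ?_
  obtain ⟨δ, hδ, hshδ⟩ := hsh.exists_shadow_of_chainFrom (lt_min hε (lt_min hεs hεu))
  obtain ⟨hxp, hpx⟩ := hx δ hδ
  obtain ⟨y, hxy, ⟨n, hn⟩, ⟨m, hm⟩⟩ := hshδ p x p hpx hxp
  have hys : y ∈ stableSet F ((F ^ (-(n : ℤ))) p) :=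
    mem_stableSet_zpow_of_iterate_mem n (hs _ fun j => (hn j).le.trans <|
      (min_le_right _ _).trans (min_le_left _ _))
  have hyu : y ∈ stableSet F.symm ((F.symm ^ (-(m : ℤ))) p) :=
    mem_stableSet_zpow_of_iterate_mem m (hu _ fun j => (hm j).le.trans <|
      (min_le_right _ _).trans (min_le_right _ _))
  rw [← Equiv.Perm.inv_def, inv_zpow', neg_neg] at hyu
  exact ⟨y, ⟨Set.mem_iUnion.mpr ⟨_, hys⟩, Set.mem_iUnion.mpr ⟨_, hyu⟩⟩,
    hxy.trans_le (min_le_left _ _)⟩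

end Shadowing

theorem Submodule.mem_of_apply_mem_of_isCompl {R E : Type*} [Ring R] [AddCommGroup E]
    [Module R E] {Es Eu : Submodule R E} (hc : IsCompl Es Eu) {A : E →ₗ[R] E}
    (hs : Set.MapsTo A Es Es) (hu : Set.MapsTo A Eu Eu) (hA : Function.Injective A) {w : E}
    (hw : A w ∈ Eu) : w ∈ Eu := by
  have hPw : A (Es.projection Eu hc w) ∈ Es ⊓ Eu := by
    refine ⟨hs (Es.projection_apply_mem hc w), ?_⟩
    have h := Eu.sub_mem hw (hu (Es.sub_projection_mem hc w))
    rwa [← map_sub, sub_sub_cancel] at h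
  have hP0 : Es.projection Eu hc w = 0 := hA (by rw [hc.inf_eq_bot] at hPw; simpa using hPw)
  simpa [hP0] using Es.sub_projection_mem hc w

section HyperbolicLinear

variable {E : Type*} [NormedAddCommGroup E] [NormedSpace ℝ E]

def IsHyperbolicLinear (A : E →L[ℝ] E) : Prop :=
  ∃ (Es Eu : Submodule ℝ E) (C lam : ℝ),
    IsCompl Es Eu ∧ 0 < C ∧ 0 < lam ∧ lam < 1 ∧
    (∀ v ∈ Es, A v ∈ Es) ∧ (∀ v ∈ Eu, A v ∈ Eu) ∧
    (∀ n : ℕ, ∀ v ∈ Es, ‖(A ^ n) v‖ ≤ C * lam ^ n * ‖v‖) ∧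
    (∀ n : ℕ, ∀ v ∈ Eu, C⁻¹ * (lam ^ n)⁻¹ * ‖v‖ ≤ ‖(A ^ n) v‖)

theorem IsHyperbolicLinear.of_mul_eq_one {A B : E →L[ℝ] E} (hA : IsHyperbolicLinear A)
    (hAB : A * B = 1) (hBA : B * A = 1) : IsHyperbolicLinear B := by
  obtain ⟨Es, Eu, C, lam, hc, hC, hl0, hl1, hs, hu, hbs, hbu⟩ := hA
  have hinj : Function.Injective A :=
    Function.LeftInverse.injective (g := B) fun v => by simpa using DFunLike.congr_fun hBA v
  have hAB_apply : ∀ v, A (B v) = v := fun v => by simpa using DFunLike.congr_fun hAB v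
  have hBs : ∀ v ∈ Es, B v ∈ Es := fun v hv => Submodule.mem_of_apply_mem_of_isCompl
    (A := (A : E →ₗ[ℝ] E)) hc.symm (fun w hw => hu w hw) (fun w hw => hs w hw) hinj
    (by simpa [hAB_apply] using hv)
  have hBu : ∀ v ∈ Eu, B v ∈ Eu := fun v hv => Submodule.mem_of_apply_mem_of_isCompl
    (A := (A : E →ₗ[ℝ] E)) hc (fun w hw => hs w hw) (fun w hw => hu w hw) hinj
    (by simpa [hAB_apply] using hv)
  have hpow : ∀ n v, (A ^ n) ((B ^ n) v) = v := fun n v => by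
    have h : A ^ n * B ^ n = 1 := by rw [← Commute.mul_pow (hAB.trans hBA.symm), hAB, one_pow]
    simpa using DFunLike.congr_fun h v
  have hCl : ∀ n : ℕ, 0 < C * lam ^ n := fun n => by positivity
  refine ⟨Eu, Es, C, lam, hc.symm, hC, hl0, hl1, hBu, hBs, fun n v hv => ?_, fun n v hv => ?_⟩
  · have h := hbu n _ ((Set.MapsTo.iterate (f := B) (fun w hw => hBu w hw) n) hv)
    rw [← FunLike.coe_pow_eq_iterate, hpow] at h
    rw [← mul_inv, inv_mul_le_iff₀ (hCl n)] at h
    exact h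
  · have h := hbs n _ ((Set.MapsTo.iterate (f := B) (fun w hw => hBs w hw) n) hv)
    rw [← FunLike.coe_pow_eq_iterate, hpow] at h
    rw [← mul_inv, inv_mul_le_iff₀ (hCl n)]
    exact h

/-- `P` stands for the projection onto the contracted subspace along the expanded one. The factor
`4` leaves room for the nonlinear error terms of the cone argument. -/
def IsStronglyHyperbolic (D : E →L[ℝ] E) : Prop :=
  ∃ P : E →L[ℝ] E, (∀ v, P (D v) = D (P v)) ∧ (∀ v, 4 * ‖D (P v)‖ ≤ ‖P v‖) ∧
    ∀ v, 4 * ‖v - P v‖ ≤ ‖D (v - P v)‖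

theorem IsHyperbolicLinear.exists_pow_isStronglyHyperbolic [FiniteDimensional ℝ E]
    {A : E →L[ℝ] E} (hA : IsHyperbolicLinear A) : ∃ N, 0 < N ∧ IsStronglyHyperbolic (A ^ N) := by
  obtain ⟨Es, Eu, C, lam, hc, hC, hl0, hl1, hs, hu, hbs, hbu⟩ := hA
  have hlim : Tendsto (fun n => C * lam ^ n) atTop (𝓝 0) := by
    simpa using (tendsto_pow_atTop_nhds_zero_of_lt_one hl0.le hl1).const_mul C
  obtain ⟨N, hN, hN0⟩ :=
    ((hlim.eventually_lt_const (by norm_num : (0 : ℝ) < 1 / 4)).and (eventually_gt_atTop 0)).exists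
  have hCl : 0 < C * lam ^ N := by positivity
  have hinvt : ∀ V : Submodule ℝ E, (∀ v ∈ V, A v ∈ V) →
      V ∈ Module.End.invtSubmodule ((A ^ N : E →L[ℝ] E) : E →ₗ[ℝ] E) := fun V hV => by
    rw [Module.End.mem_invtSubmodule_iff_mapsTo, ContinuousLinearMap.coe_coe,
      FunLike.coe_pow_eq_iterate]
    exact Set.MapsTo.iterate (fun v hv => hV v hv) N
  have hcomm := LinearMap.IsIdempotentElem.commute_iff
    (Submodule.isIdempotentElem_projection hc) |>.mpr
    ⟨by rw [Submodule.range_projection]; exact hinvt Es hs,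
      by rw [Submodule.ker_projection]; exact hinvt Eu hu⟩
  set P := Es.projection Eu hc
  refine ⟨N, hN0, LinearMap.toContinuousLinearMap P, fun v => ?_, fun v => ?_, fun v => ?_⟩
  · exact DFunLike.congr_fun hcomm.eq v
  · calc 4 * ‖(A ^ N) (P v)‖ ≤ 4 * (C * lam ^ N * ‖P v‖) := by
          gcongr
          exact hbs N _ (Es.projection_apply_mem hc v)
      _ ≤ ‖P v‖ := by nlinarith [norm_nonneg (P v)]
  · calc 4 * ‖v - P v‖ ≤ C⁻¹ * (lam ^ N)⁻¹ * ‖v - P v‖ := by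
          gcongr
          rw [← mul_inv, le_inv_comm₀ (by norm_num) hCl]
          linarith
      _ ≤ ‖(A ^ N) (v - P v)‖ := hbu N _ (Es.sub_projection_mem hc v)

theorem le_of_cone_estimates {s w : ℕ → ℝ} {R : ℝ} (hs0 : ∀ m, 0 ≤ s m) (hwR : ∀ m, w m ≤ R)
    (hs : ∀ m, s (m + 1) ≤ s m / 4 + (s m + w m) / 8)
    (hw : ∀ m, 4 * w m - (s m + w m) / 8 ≤ w (m + 1)) (m : ℕ) : w m ≤ s m := by
  by_contra! hm
  -- once the expanded part dominates, it doubles at every step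
  have hgrow : ∀ j, s (m + j) < w (m + j) ∧ 2 ^ j * w m ≤ w (m + j) := by
    intro j
    induction j with
    | zero => simpa using hm
    | succ j ih =>
      have h0 := hs0 (m + j)
      have h1 := hs (m + j)
      have h2 := hw (m + j)
      rw [← add_assoc, pow_succ]
      constructor <;> nlinarith [ih.1, ih.2]
  have hwm : 0 < w m := (hs0 m).trans_lt hm
  obtain ⟨j, hj⟩ := pow_unbounded_of_one_lt (R / w m) one_lt_two
  have := (hgrow j).2.trans (hwR _)
  rw [div_lt_iff₀ hwm] at hj
  linarith

theorem tendsto_of_cone_estimates {s w : ℕ → ℝ} {R : ℝ} (hs0 : ∀ m, 0 ≤ s m)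
    (hw0 : ∀ m, 0 ≤ w m) (hwR : ∀ m, w m ≤ R) (hs : ∀ m, s (m + 1) ≤ s m / 4 + (s m + w m) / 8)
    (hw : ∀ m, 4 * w m - (s m + w m) / 8 ≤ w (m + 1)) :
    Tendsto (fun m => s m + w m) atTop (𝓝 0) := by
  have hws := le_of_cone_estimates hs0 hwR hs hw
  have hdecay : ∀ m, s m ≤ (1 / 2) ^ m * s 0 := by
    intro m
    induction m with
    | zero => simp
    | succ m ih =>
      rw [pow_succ]
      nlinarith [hs m, hws m]
  have hlim : Tendsto (fun m : ℕ => 2 * ((1 / 2 : ℝ) ^ m * s 0)) atTop (𝓝 0) := by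
    simpa using ((tendsto_pow_atTop_nhds_zero_of_lt_one (by norm_num : (0 : ℝ) ≤ 1 / 2)
      (by norm_num)).mul_const (s 0)).const_mul 2
  exact squeeze_zero (fun m => add_nonneg (hs0 m) (hw0 m))
    (fun m => by linarith [hws m, hdecay m]) hlim

theorem IsStronglyHyperbolic.exists_tendsto_zero {D : E →L[ℝ] E} (hD : IsStronglyHyperbolic D) :
    ∃ c > 0, ∀ (R : ℝ) (u : ℕ → E), (∀ m, ‖u m‖ ≤ R) →
      (∀ m, ‖u (m + 1) - D (u m)‖ ≤ c * ‖u m‖) → Tendsto u atTop (𝓝 0) := by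
  obtain ⟨P, hPD, hcon, hexp⟩ := hD
  set K := ‖P‖ + 1
  have hK : 0 < K := by positivity
  have hP : ∀ v, ‖P v‖ ≤ K * ‖v‖ := fun v =>
    (P.le_opNorm v).trans (by gcongr; linarith)
  have hQ : ∀ v, ‖v - P v‖ ≤ K * ‖v‖ := fun v =>
    (norm_sub_le _ _).trans (by linarith [P.le_opNorm v])
  have hsplit : ∀ v, ‖v‖ ≤ ‖P v‖ + ‖v - P v‖ := fun v => by
    simpa using norm_add_le (P v) (v - P v)
  refine ⟨1 / (8 * K), by positivity, fun R u hR hstep => ?_⟩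
  set e := fun m => u (m + 1) - D (u m)
  have he : ∀ m, K * ‖e m‖ ≤ (‖P (u m)‖ + ‖u m - P (u m)‖) / 8 := fun m => by
    calc K * ‖e m‖ ≤ K * (1 / (8 * K) * ‖u m‖) := by gcongr; exact hstep m
      _ = ‖u m‖ / 8 := by field_simp
      _ ≤ _ := by linarith [hsplit (u m)]
  have hPs : ∀ m, P (u (m + 1)) = D (P (u m)) + P (e m) := fun m => by
    rw [← hPD, ← map_add, add_sub_cancel]
  have hQs : ∀ m, u (m + 1) - P (u (m + 1)) = D (u m - P (u m)) + (e m - P (e m)) := fun m => by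
    simp only [e, map_sub, hPD]
    abel
  have hlim := tendsto_of_cone_estimates (s := fun m => ‖P (u m)‖)
    (w := fun m => ‖u m - P (u m)‖) (R := K * R) (fun m => norm_nonneg _)
    (fun m => norm_nonneg _) (fun m => (hQ _).trans (by gcongr; exact hR m)) (fun m => ?_)
    (fun m => ?_)
  · exact tendsto_zero_iff_norm_tendsto_zero.mpr
      (squeeze_zero (fun m => norm_nonneg _) (fun m => hsplit (u m)) hlim)
  · calc ‖P (u (m + 1))‖ ≤ ‖D (P (u m))‖ + ‖P (e m)‖ := by rw [hPs]; exact norm_add_le _ _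
      _ ≤ _ := by linarith [hcon (u m), hP (e m), he m]
  · calc 4 * ‖u m - P (u m)‖ - (‖P (u m)‖ + ‖u m - P (u m)‖) / 8
        ≤ ‖D (u m - P (u m))‖ - ‖e m - P (e m)‖ := by linarith [hexp (u m), hQ (e m), he m]
      _ ≤ _ := by rw [hQs]; exact norm_sub_le_norm_add _ _

end HyperbolicLinear

theorem tendsto_atTop_of_forall_tendsto_mul_add {α : Type*} {l : Filter α} {a : ℕ → α} {K : ℕ}
    (hK : 0 < K) (h : ∀ r < K, Tendsto (fun m => a (K * m + r)) atTop l) :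
    Tendsto a atTop l := by
  refine tendsto_iff_forall_eventually_mem.mpr fun U hU => ?_
  have hall : ∀ᶠ m in atTop, ∀ r ∈ Finset.range K, a (K * m + r) ∈ U :=
    (Filter.eventually_all_finset _).mpr fun r hr => h r (Finset.mem_range.mp hr) hU
  filter_upwards [(Nat.tendsto_div_const_atTop hK.ne').eventually hall] with n hn
  simpa [Nat.div_add_mod] using hn (n % K) (Finset.mem_range.mpr (Nat.mod_lt n hK))

theorem mem_stableSet_of_tendsto_iterate_mul {X : Type*} [MetricSpace X] {g : X → X}
    (hg : Continuous g) {p y : X} {K : ℕ} (hK : 0 < K) (hp : g^[K] p = p)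
    (h : Tendsto (fun m => g^[K * m] y) atTop (𝓝 p)) : y ∈ stableSet g p := by
  refine tendsto_atTop_of_forall_tendsto_mul_add hK fun r _ => ?_
  have hpK : ∀ m, g^[K * m] p = p := fun m => by
    rw [Function.iterate_mul]; exact Function.iterate_fixed hp m
  simp only [add_comm _ r, Function.iterate_add_apply, hpK]
  simpa using ((hg.iterate r).tendsto p |>.comp h).dist (tendsto_const_nhds (x := g^[r] p))

section Manifold

variable {𝕜 E H X : Type*} [NontriviallyNormedField 𝕜] [NormedAddCommGroup E] [NormedSpace 𝕜 E]
  [TopologicalSpace H] {I : ModelWithCorners 𝕜 E H} [TopologicalSpace X] [ChartedSpace H X]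

theorem HasMFDerivAt.iterate {g : X → X} {p : X} {A : E →L[𝕜] E} (hg : HasMFDerivAt I I g p A)
    (hp : g p = p) (n : ℕ) : HasMFDerivAt I I g^[n] p (A ^ n) := by
  induction n with
  | zero => exact hasMFDerivAt_id p
  | succ n ih =>
    rw [Function.iterate_succ', pow_succ']
    exact (Function.iterate_fixed hp n ▸ hg).comp p ih

theorem mfderiv_comp_mfderiv_eq_id_of_leftInverse {g g' : X → X} {p : X}
    (hg : MDifferentiableAt I I g p) (hg' : MDifferentiableAt I I g' p) (hp : g p = p) (hinv : Function.LeftInverse g' g) :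
    (mfderiv I I g' p).comp (mfderiv I I g p) = ContinuousLinearMap.id 𝕜 E := by
  have h := mfderiv_comp p (hp ▸ hg') hg
  rw [show g' ∘ g = id from funext hinv, mfderiv_id, hp] at h
  exact h.symm

end Manifold

theorem HasMFDerivAt.exists_nhds_tendsto_iterate {E H X : Type*} [NormedAddCommGroup E]
    [NormedSpace ℝ E] [TopologicalSpace H] {I : ModelWithCorners ℝ E H} [I.Boundaryless]
    [TopologicalSpace X] [ChartedSpace H X] {G : X → X} {p : X} {D : E →L[ℝ] E}
    (hG : HasMFDerivAt I I G p D) (hp : G p = p) (hD : IsStronglyHyperbolic D) :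
    ∃ U ∈ 𝓝 p, ∀ y, (∀ m, G^[m] y ∈ U) → Tendsto (fun m => G^[m] y) atTop (𝓝 p) := by
  set φ := extChartAt I p
  obtain ⟨c, hc, hcone⟩ := hD.exists_tendsto_zero
  have hfd : HasFDerivAt (writtenInExtChartAt I I p G) D (φ p) := by
    have h := hG.2
    rw [I.range_eq_univ] at h
    exact hasFDerivWithinAt_univ.mp h
  have hwr : ∀ z ∈ φ.source, writtenInExtChartAt I I p G (φ z) = φ (G z) := fun z hz => by
    rw [writtenInExtChartAt, Function.comp_apply, Function.comp_apply, φ.left_inv hz, hp]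
  have happrox := (continuousAt_extChartAt p).eventually (hfd.isLittleO.def hc)
  have hnear := (continuousAt_extChartAt p).eventually (Metric.closedBall_mem_nhds (φ p) one_pos)
  refine ⟨_, happrox.and (hnear.and (extChartAt_source_mem_nhds (I := I) p)), fun y hy => ?_⟩
  -- in the chart the orbit is a bounded approximate orbit of `D` around the fixed point `φ p`
  have hu := hcone 1 (fun m => φ (G^[m] y) - φ p) (fun m => by
      rw [← dist_eq_norm]; exact (hy m).2.1) fun m => by
    have h := (hy m).1
    rwa [hwr _ (hy m).2.2, hwr _ (mem_extChartAt_source p), hp,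
      ← Function.iterate_succ_apply' G m y] at h
  have hφ : Tendsto (fun m => φ (G^[m] y)) atTop (𝓝 (φ p)) := by
    simpa using hu.add_const (φ p)
  have h := (continuousAt_extChartAt_symm p).tendsto.comp hφ
  rw [Function.comp_def, (extChartAt I p).left_inv (mem_extChartAt_source p)] at h
  exact h.congr fun m => (extChartAt I p).left_inv (hy m).2.2

section HyperbolicPeriodic

variable {X : Type*} [MetricSpace X] [ChartedSpace (EuclideanSpace ℝ (Fin d)) X]

theorem isHyperbolicPeriodicPt_iff {g : X → X} {p : X} {k : ℕ} :
    IsHyperbolicPeriodicPt (d := d) g p k ↔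
      0 < k ∧ g^[k] p = p ∧ IsHyperbolicLinear (E := EuclideanSpace ℝ (Fin d))
        (mfderiv (𝓡 d) (𝓡 d) g^[k] p) :=
  ⟨fun ⟨hk, hp, h⟩ => ⟨hk, hp, h _ rfl⟩, fun ⟨hk, hp, h⟩ => ⟨hk, hp, fun _ hA => hA ▸ h⟩⟩

theorem IsHyperbolicPeriodicPt.symm {n : WithTop ℕ∞} (hn : n ≠ 0)
    (f : Diffeomorph (𝓡 d) (𝓡 d) X X n) {p : X} {k : ℕ}
    (h : IsHyperbolicPeriodicPt (d := d) f p k) : IsHyperbolicPeriodicPt (d := d) f.symm p k := by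
  obtain ⟨hk, hp, hA⟩ := isHyperbolicPeriodicPt_iff.mp h
  have hp' : f.symm^[k] p = p := by
    conv_lhs => rw [← hp]
    exact Function.LeftInverse.iterate f.symm_apply_apply k p
  have hf := (f.contMDiff.iterate k).mdifferentiableAt (x := p) hn
  have hf' := (f.symm.contMDiff.iterate k).mdifferentiableAt (x := p) hn
  have hinv := Function.LeftInverse.iterate f.symm_apply_apply k
  have hinv' := Function.LeftInverse.iterate f.apply_symm_apply k
  exact isHyperbolicPeriodicPt_iff.mpr ⟨hk, hp', hA.of_mul_eq_one
    (mfderiv_comp_mfderiv_eq_id_of_leftInverse hf' hf hp' hinv')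
    (mfderiv_comp_mfderiv_eq_id_of_leftInverse hf hf' hp hinv)⟩

theorem IsHyperbolicPeriodicPt.exists_mem_stableSet {g : X → X} {n : WithTop ℕ∞} (hn : n ≠ 0)
    (hg : ContMDiff (𝓡 d) (𝓡 d) n g) {p : X} {k : ℕ} (h : IsHyperbolicPeriodicPt (d := d) g p k) :
    ∃ ε > 0, ∀ y, (∀ j, dist (g^[j] y) (g^[j] p) ≤ ε) → y ∈ stableSet g p := by
  obtain ⟨hk, hp, hA⟩ := isHyperbolicPeriodicPt_iff.mp h
  set A : EuclideanSpace ℝ (Fin d) →L[ℝ] EuclideanSpace ℝ (Fin d) := mfderiv (𝓡 d) (𝓡 d) g^[k] p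
  obtain ⟨N, hN, hD⟩ := hA.exists_pow_isStronglyHyperbolic
  have hG : HasMFDerivAt (𝓡 d) (𝓡 d) g^[k * N] p (A ^ N) := by
    rw [Function.iterate_mul]
    exact ((hg.iterate k).mdifferentiableAt hn).hasMFDerivAt.iterate hp N
  have hGp : g^[k * N] p = p := by rw [Function.iterate_mul]; exact Function.iterate_fixed hp N
  obtain ⟨U, hU, hUp⟩ := hG.exists_nhds_tendsto_iterate hGp hD
  obtain ⟨ε, hε, hεU⟩ := Metric.mem_nhds_iff.mp hU
  refine ⟨ε / 2, half_pos hε, fun y hy => ?_⟩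
  refine mem_stableSet_of_tendsto_iterate_mul hg.continuous (by positivity) hGp ?_
  refine (hUp y fun m => hεU ?_).congr fun m => by rw [← Function.iterate_mul]
  have h := hy (k * N * m)
  rw [Function.iterate_mul g (k * N) m, Function.iterate_fixed hGp] at h
  exact Metric.mem_ball.mpr (h.trans_lt (half_lt_self hε))

end HyperbolicPeriodic

theorem chainClass_eq_homoclinicClass_general
    (f : Diffeomorph (𝓡 d) (𝓡 d) M M (⊤ : ℕ∞))
    (hKS : KupkaSmale (d := d) f.toEquiv)
    (hsh : ShadowingProperty f.toEquiv)
    (p : M) (k : ℕ) (hk : 0 < k) (hp : (⇑f.toEquiv)^[k] p = p)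
    (Λ : Set M) (hΛ : Λ = chainClass ⇑f.toEquiv p) :
    Λ = homoclinicClass (d := d) f.toEquiv p := by
  have hhyp : IsHyperbolicPeriodicPt (d := d) f p k := hKS.1 p k hk hp
  obtain ⟨εs, hεs, hs⟩ := hhyp.exists_mem_stableSet (by simp) f.contMDiff
  obtain ⟨εu, hεu, hu⟩ := (hhyp.symm (by simp) f).exists_mem_stableSet (by simp) f.symm.contMDiff
  have htrans : {z | z ∈ orbitStable f.toEquiv p ∧ z ∈ orbitUnstable f.toEquiv p ∧
      TransverseAt (d := d) z (orbitStable f.toEquiv p) (orbitUnstable f.toEquiv p)} =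
      orbitStable f.toEquiv p ∩ orbitUnstable f.toEquiv p :=
    Set.ext fun z => ⟨fun hz => ⟨hz.1, hz.2.1⟩,
      fun hz => ⟨hz.1, hz.2, hKS.2 p p z ⟨k, hk, hp⟩ ⟨k, hk, hp⟩ hz.1 hz.2⟩⟩
  rw [hΛ, homoclinicClass, htrans]
  exact (chainClass_subset_closure_orbitStable_inter_orbitUnstable hsh hεs hεu hs hu).antisymm
    (closure_minimal (orbitStable_inter_orbitUnstable_subset_chainClass hp hk)
      (isClosed_chainClass f.continuous p))

/-- For a Kupka–Smale diffeomorphism of a compact manifold with the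
shadowing property, a chain transitive class containing a periodic point `p` equals the
homoclinic class of `p`. -/
theorem chainClass_eq_homoclinicClass [IsManifold (𝓡 d) (⊤ : ℕ∞) M]
    (f : Diffeomorph (𝓡 d) (𝓡 d) M M (⊤ : ℕ∞))
    (hKS : KupkaSmale (d := d) f.toEquiv)
    (hsh : ShadowingProperty f.toEquiv)
    (p : M) (k : ℕ) (hk : 0 < k) (hp : (⇑f.toEquiv)^[k] p = p)
    (Λ : Set M) (hΛ : Λ = chainClass ⇑f.toEquiv p) :
    Λ = homoclinicClass (d := d) f.toEquiv p :=
  chainClass_eq_homoclinicClass_general f hKS hsh p k hk hp Λ hΛ
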